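/- Let Λ be a countable index set, let (κ_λ)_{λ∈Λ} ∈ (0,∞)^Λ with sup_λ κ_λ < ∞, and for each λ let s_λ : ℝ → [0,∞] be proper, convex and lower semicontinuous with s_λ(0) = 0; set φ_λ := prox_{s_λ}. If x ∈ ℓ²(Λ) satisfies x = (φ_λ(z_λ)/κ_λ)_λ for some z = (z_λ)_λ ∈ ℓ²(Λ), then ∑_λ s_λ(κ_λ x_λ) < ∞. -/
import Mathlib


open scoped ENNReal

noncomputable section

/-- `p` is the (unique) proximal point at `x` of the `[0,∞]`-valued functional `s`, i.e.
`p = prox_s(x)` is the unique minimizer of `y ↦ (x-y)²/2 + s(y)`. -/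
def IsProxPtE (s : ℝ → ℝ≥0∞) (x p : ℝ) : Prop :=
  (∀ y : ℝ, ENNReal.ofReal ((x - p) ^ 2 / 2) + s p ≤ ENNReal.ofReal ((x - y) ^ 2 / 2) + s y) ∧
  ∀ q : ℝ, (∀ y : ℝ, ENNReal.ofReal ((x - q) ^ 2 / 2) + s q ≤
    ENNReal.ofReal ((x - y) ^ 2 / 2) + s y) → q = p

/-- Convexity for `[0,∞]`-valued functions on `ℝ`. -/
def ENNConvexOn (s : ℝ → ℝ≥0∞) : Prop :=
  ∀ x y : ℝ, ∀ a b : ℝ, 0 ≤ a → 0 ≤ b → a + b = 1 →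
    s (a * x + b * y) ≤ ENNReal.ofReal a * s x + ENNReal.ofReal b * s y

/-- If `x ∈ ℓ²(Λ)` has the form `x_λ = prox_{s_λ}(z_λ)/κ_λ` for some
`z ∈ ℓ²(Λ)`, then `∑_λ s_λ(κ_λ x_λ) < ∞`. -/
theorem statement4 {Λ : Type*} [Countable Λ]
    (κ : Λ → ℝ) (hκ : ∀ l, 0 < κ l) (hκbd : BddAbove (Set.range κ))
    (s : Λ → ℝ → ℝ≥0∞)
    (hproper : ∀ l, ∃ x, s l x ≠ ⊤)
    (hconv : ∀ l, ENNConvexOn (s l))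
    (hlsc : ∀ l, LowerSemicontinuous (s l))
    (hs0 : ∀ l, s l 0 = 0)
    (φ : Λ → ℝ → ℝ) (hφ : ∀ l x, IsProxPtE (s l) x (φ l x))
    (x z : lp (fun _ : Λ => ℝ) 2)
    (hx : ∀ l, x l = φ l (z l) / κ l) :
    ∑' l, s l (κ l * x l) < ⊤ := by
  have hkx : ∀ l, κ l * x l = φ l (z l) := by
    intro l; rw [hx l, mul_div_cancel₀ _ (hκ l).ne']
  have hbound : ∀ l, s l (κ l * x l) ≤ ENNReal.ofReal ((z l) ^ 2 / 2) := by
    intro l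
    rw [hkx l]
    have h := (hφ l (z l)).1 0
    rw [hs0 l, add_zero, sub_zero] at h
    calc s l (φ l (z l))
        ≤ ENNReal.ofReal ((z l - φ l (z l)) ^ 2 / 2) + s l (φ l (z l)) := le_add_self
      _ ≤ ENNReal.ofReal ((z l) ^ 2 / 2) := h
  have hsum : Summable (fun l => (z l) ^ 2 / 2) := by
    have h1 := (lp.memℓp z).summable (p := 2) (by norm_num)
    have h2 : (fun l => ‖z l‖ ^ (2 : ℝ≥0∞).toReal) = fun l => (z l) ^ 2 := by
      funext l
      rw [show ((2 : ℝ≥0∞).toReal) = ((2 : ℕ) : ℝ) by norm_num, Real.rpow_natCast]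
      simp [sq_abs]
    rw [h2] at h1
    exact h1.div_const 2
  calc ∑' l, s l (κ l * x l)
      ≤ ∑' l, ENNReal.ofReal ((z l) ^ 2 / 2) := ENNReal.tsum_le_tsum hbound
    _ = ENNReal.ofReal (∑' l, (z l) ^ 2 / 2) :=
        (ENNReal.ofReal_tsum_of_nonneg (fun l => by positivity) hsum).symm
    _ < ⊤ := ENNReal.ofReal_lt_top
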